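/- arXiv:1405.4275 — 4 statements merged into one kernel-verified Lean document; each statement's English description precedes it below -/
import Mathlib

section
/- Let x_1, …, x_n ∈ ℝ^p and suppose P = conv{x_1, …, x_n} is full-dimensional with exactly k extreme points h_1, …, h_k, whose normal cones have solid angles ω_i = ω(N_P(h_i)) satisfying 0 < ω_i < 1/2 for every i. Let g_1, …, g_m be i.i.d. standard Gaussian vectors in ℝ^p and let δ ∈ (0,1). If m > κ log(k/δ) where κ = 1/log(1/max_i(1 − 2ω_i)), then with probability at least 1 − δ, for every i ∈ {1,…,k} there exists j ∈ {1,…,m} with g_j ∈ N_P(h_i) ∪ (−N_P(h_i)); that is, the proto-algorithm finds all k extreme points. -/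
open MeasureTheory ProbabilityTheory Metric Set
open scoped Pointwise

/-- The standard Gaussian measure `N(0, I_p)` on `ℝ^p`. -/
noncomputable def stdGaussian (p : ℕ) : Measure (EuclideanSpace ℝ (Fin p)) :=
  (Measure.pi fun _ : Fin p => gaussianReal 0 1).map
    (MeasurableEquiv.toLp 2 (Fin p → ℝ))

/-- The solid angle of a cone `K ⊆ ℝ^p`: its standard Gaussian measure. -/
noncomputable def solidAngle {p : ℕ} (K : Set (EuclideanSpace ℝ (Fin p))) : ℝ :=
  (stdGaussian p K).toReal

/-- The normal cone of a convex set `C` at a point `x`. -/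
def normalCone {p : ℕ} (C : Set (EuclideanSpace ℝ (Fin p))) (x : EuclideanSpace ℝ (Fin p)) :
    Set (EuclideanSpace ℝ (Fin p)) :=
  {w | ∀ y ∈ C, (inner ℝ w (y - x) : ℝ) ≤ 0}


/-! A single Gaussian vector `g` finds the vertex `h` when `g ∈ N ∪ -N`, `N` its normal cone.
Full-dimensionality forces `N ∩ -N = {0}`, a Gaussian null set, and the Gaussian is symmetric,
so `g` misses `N ∪ -N` with probability `1 - 2ω`. All `m` independent samples miss it with
probability `(1 - 2ω)^m ≤ R^m`, `R = max_i (1 - 2ω_i)`, and a union bound over the `k` vertices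
bounds the failure probability by `k R^m`, which is `< δ` as soon as `m > log(k/δ) / log(1/R)`. -/

open Filter Topology

instance (p : ℕ) : IsProbabilityMeasure (stdGaussian p) :=
  Measure.isProbabilityMeasure_map (MeasurableEquiv.measurable _).aemeasurable

instance : (gaussianReal 0 1).IsNegInvariant :=
  ⟨by simpa [Measure.neg] using gaussianReal_map_neg (μ := 0) (v := 1)⟩

instance (p : ℕ) : (stdGaussian p).IsNegInvariant := by
  refine ⟨?_⟩
  have hcomm : (Neg.neg ∘ MeasurableEquiv.toLp 2 (Fin p → ℝ)) =
      MeasurableEquiv.toLp 2 _ ∘ Neg.neg := rfl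
  rw [Measure.neg, _root_.stdGaussian,
    Measure.map_map measurable_neg (MeasurableEquiv.measurable _), hcomm,
    ← Measure.map_map (MeasurableEquiv.measurable _) measurable_neg, Measure.map_neg_eq_self]

lemma stdGaussian_singleton {p : ℕ} (hp : p ≠ 0) (v : EuclideanSpace ℝ (Fin p)) :
    stdGaussian p {v} = 0 := by
  have := nullSingletonClass_gaussianReal (μ := 0) one_ne_zero
  have : Nonempty (Fin p) := ⟨⟨0, Nat.pos_of_ne_zero hp⟩⟩
  rw [_root_.stdGaussian, MeasurableEquiv.map_apply]
  exact (subsingleton_singleton.preimage (MeasurableEquiv.injective _)).measure_zero _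

lemma isClosed_normalCone {p : ℕ} (C : Set (EuclideanSpace ℝ (Fin p)))
    (x : EuclideanSpace ℝ (Fin p)) : IsClosed (normalCone C x) := by
  simp only [normalCone, ofPred_forall]
  exact isClosed_biInter fun y _ =>
    isClosed_le (continuous_id.inner continuous_const) continuous_const

lemma one_sub_sum_le_measureReal_pi_forall_exists_mem {Ω ι : Type*} [MeasurableSpace Ω]
    [Fintype ι] (ν : Measure Ω) [IsProbabilityMeasure ν] (S : ι → Set Ω) (m : ℕ) :
    1 - ∑ i, ν.real (S i)ᶜ ^ m ≤
      (Measure.pi fun _ : Fin m => ν).real {g | ∀ i, ∃ j, g j ∈ S i} := by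
  set μ := Measure.pi fun _ : Fin m => ν
  set E := {g : Fin m → Ω | ∀ i, ∃ j, g j ∈ S i}
  have hcompl : Eᶜ = ⋃ i, Set.pi univ fun _ => (S i)ᶜ := by
    ext g; simp [E]
  have hsplit : 1 ≤ μ.real E + μ.real Eᶜ := by
    simpa using measureReal_union_le (μ := μ) E Eᶜ
  have hunion : μ.real Eᶜ ≤ ∑ i, ν.real (S i)ᶜ ^ m := by
    rw [hcompl]
    refine (measureReal_iUnion_fintype_le _).trans_eq ?_
    simp [μ, measureReal_def, Measure.pi_pi]
  linarith

lemma sum_pow_lt_of_log_div_lt {ι : Type*} [Fintype ι] {r : ι → ℝ} (hr0 : ∀ i, 0 < r i)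
    (hr1 : ∀ i, r i < 1) {δ : ℝ} (hδ : 0 < δ) {m : ℕ}
    (hm : Real.log (Fintype.card ι / δ) / Real.log (1 / ⨆ i, r i) < m) :
    ∑ i, r i ^ m < δ := by
  rcases isEmpty_or_nonempty ι with hι | hι
  · simpa using hδ
  obtain ⟨i₀, hi₀⟩ := exists_eq_ciSup_of_finite (f := r)
  set R := ⨆ i, r i
  have hR0 : 0 < R := hi₀ ▸ hr0 i₀
  have hlog : 0 < Real.log (1 / R) := Real.log_pos (one_lt_one_div hR0 (hi₀ ▸ hr1 i₀))
  have hpow : Fintype.card ι / δ < 1 / R ^ m := by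
    rw [div_lt_iff₀ hlog, ← Real.log_pow, Real.log_lt_log_iff (by positivity) (by positivity),
      one_div_pow] at hm
    exact hm
  calc ∑ i, r i ^ m ≤ ∑ _i : ι, R ^ m :=
        Finset.sum_le_sum fun i _ =>
          pow_le_pow_left₀ (hr0 i).le (le_ciSup (Finite.bddAbove_range r) i) m
    _ = Fintype.card ι * R ^ m := by simp
    _ < δ := by
      rw [div_lt_div_iff₀ hδ (by positivity)] at hpow
      linarith

lemma normalCone_inter_neg_subset {p : ℕ} {C : Set (EuclideanSpace ℝ (Fin p))}
    (hC : (interior C).Nonempty) (x : EuclideanSpace ℝ (Fin p)) :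
    normalCone C x ∩ -normalCone C x ⊆ {0} := by
  rintro w ⟨hw, hw'⟩
  obtain ⟨z, hz⟩ := hC
  have hline : ∀ᶠ t : ℝ in 𝓝 0, z + t • w ∈ C := by
    have : Tendsto (fun t : ℝ => z + t • w) (𝓝 0) (𝓝 z) :=
      (by fun_prop : Continuous fun t : ℝ => z + t • w).tendsto' 0 z (by simp)
    exact this (mem_interior_iff_mem_nhds.mp hz)
  obtain ⟨t, htC, ht⟩ :=
    ((hline.filter_mono nhdsWithin_le_nhds).and (self_mem_nhdsWithin (s := Ioi 0))).exists
  -- `w` is orthogonal to `C - x`, but `C` contains the segment from `z` to `z + t • w`.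
  have hfar := hw _ htC
  have hnear := hw' z (interior_subset hz)
  rw [show z + t • w - x = (z - x) + t • w by abel, inner_add_right, real_inner_smul_right,
    real_inner_self_eq_norm_sq] at hfar
  rw [inner_neg_left] at hnear
  have : t * ‖w‖ ^ 2 ≤ 0 := by linarith
  have : ‖w‖ ^ 2 ≤ 0 := nonpos_of_mul_nonpos_right this ht
  simpa using this

lemma solidAngle_normalCone_fin_zero (C : Set (EuclideanSpace ℝ (Fin 0)))
    (x : EuclideanSpace ℝ (Fin 0)) : solidAngle (normalCone C x) = 1 := by
  have : normalCone C x = univ := Subsingleton.eq_univ_of_nonempty ⟨0, fun y _ => by simp⟩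
  simp [solidAngle, this]

lemma measureReal_compl_normalCone_union_neg {p : ℕ} (hp : p ≠ 0)
    {C : Set (EuclideanSpace ℝ (Fin p))} (hC : (interior C).Nonempty)
    (x : EuclideanSpace ℝ (Fin p)) :
    (stdGaussian p).real (normalCone C x ∪ -normalCone C x)ᶜ =
      1 - 2 * solidAngle (normalCone C x) := by
  set N := normalCone C x
  have hN : MeasurableSet N := (isClosed_normalCone C x).measurableSet
  have hdisj : AEDisjoint (stdGaussian p) N (-N) :=
    measure_mono_null (normalCone_inter_neg_subset hC x) (stdGaussian_singleton hp 0)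
  rw [probReal_compl_eq_one_sub (hN.union hN.neg),
    measureReal_union₀ hN.neg.nullMeasurableSet hdisj, measureReal_def, measureReal_def,
    Measure.measure_neg, solidAngle]
  ring

theorem proto_algorithm_exact_recovery_general
    (p k m : ℕ)
    (P : Set (EuclideanSpace ℝ (Fin p)))
    (hfull : (interior P).Nonempty)
    (h : Fin k → EuclideanSpace ℝ (Fin p))
    (ω : Fin k → ℝ) (hω : ∀ i, ω i = solidAngle (normalCone P (h i)))
    (hωpos : ∀ i, 0 < ω i) (hωlt : ∀ i, ω i < 1 / 2)
    (δ : ℝ) (hδ : δ ∈ Set.Ioo (0 : ℝ) 1)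
    (κ : ℝ) (hκ : κ = 1 / Real.log (1 / (⨆ i, 1 - 2 * ω i)))
    (hm : (m : ℝ) > κ * Real.log (k / δ)) :
    1 - δ ≤ ((Measure.pi fun _ : Fin m => stdGaussian p)
      {g | ∀ i : Fin k, ∃ j : Fin m,
        g j ∈ normalCone P (h i) ∪ -normalCone P (h i)}).toReal := by
  have hmiss : ∀ i, (stdGaussian p).real (normalCone P (h i) ∪ -normalCone P (h i))ᶜ
      = 1 - 2 * ω i := by
    intro i
    have hp : p ≠ 0 := by
      rintro rfl
      linarith [hωlt i, hω i, solidAngle_normalCone_fin_zero P (h i)]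
    rw [hω i, measureReal_compl_normalCone_union_neg hp hfull]
  have hsmall : ∑ i, (1 - 2 * ω i) ^ m < δ := by
    refine sum_pow_lt_of_log_div_lt (fun i => by linarith [hωlt i])
      (fun i => by linarith [hωpos i]) hδ.1 ?_
    rwa [Fintype.card_fin, ← one_div_mul_eq_div, ← hκ]
  calc 1 - δ
      ≤ 1 - ∑ i, (stdGaussian p).real (normalCone P (h i) ∪ -normalCone P (h i))ᶜ ^ m := by
        simp only [hmiss]; linarith
    _ ≤ _ := one_sub_sum_le_measureReal_pi_forall_exists_mem _ _ m

/-- Theorem 1 (exact recovery): if `m > κ log(k/δ)` with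
`κ = 1/log(1/max_i (1 - 2ω_i))`, then with probability at least `1 - δ` the proto-algorithm
finds all `k` extreme points, i.e. every normal cone (or its negation) contains some `g_j`. -/
theorem proto_algorithm_exact_recovery
    (p n k m : ℕ) (x : Fin n → EuclideanSpace ℝ (Fin p))
    (P : Set (EuclideanSpace ℝ (Fin p))) (hP : P = convexHull ℝ (Set.range x))
    (hfull : (interior P).Nonempty)
    (h : Fin k → EuclideanSpace ℝ (Fin p)) (hinj : Function.Injective h)
    (hext : Set.range h = Set.extremePoints ℝ P)
    (ω : Fin k → ℝ) (hω : ∀ i, ω i = solidAngle (normalCone P (h i)))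
    (hωpos : ∀ i, 0 < ω i) (hωlt : ∀ i, ω i < 1 / 2)
    (δ : ℝ) (hδ : δ ∈ Set.Ioo (0 : ℝ) 1)
    (κ : ℝ) (hκ : κ = 1 / Real.log (1 / (⨆ i, 1 - 2 * ω i)))
    (hm : (m : ℝ) > κ * Real.log (k / δ)) :
    1 - δ ≤ ((Measure.pi fun _ : Fin m => stdGaussian p)
      {g | ∀ i : Fin k, ∃ j : Fin m,
        g j ∈ normalCone P (h i) ∪ -normalCone P (h i)}).toReal :=
  proto_algorithm_exact_recovery_general p k m P hfull h ω hω hωpos hωlt δ hδ κ hκ hm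
end

section
/- Let P ⊂ ℝ^k (k ≥ 2) be a convex polytope with at least two extreme points, let h be an extreme point of P with simplicial constant α = α_P(h) > 0, and suppose there exist r > 0 and a unit vector a ∈ S^{k−1} such that r²/(α² + r²) ≥ 1/2 and the tangent cone T_P(h) = cone(P − h) contains the circular cone {x ∈ ℝ^k : ⟨a, x⟩ ≥ (α/√(α² + r²))‖x‖₂} (the cone with axis a and half-angle arctan(r/α)). Then the solid angle of the normal cone satisfies ω(N_P(h)) ≤ (√(α² + r²)/(2r))^k. -/
open MeasureTheory ProbabilityTheory Metric Set
open scoped Pointwise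

/-- The simplicial constant of a polytope `P` at an extreme point `h`: the distance from
`h` to the convex hull of the other extreme points. -/
noncomputable def simplicialConst {k : ℕ} (P : Set (EuclideanSpace ℝ (Fin k)))
    (h : EuclideanSpace ℝ (Fin k)) : ℝ :=
  Metric.infDist h (convexHull ℝ (Set.extremePoints ℝ P \ {h}))

/-!
The tangent cone at `h` contains the circular cone with axis `a` and parameter
`t = α / √(α² + r²)`, so the normal cone, being its polar, lies in the circular cone with axis
`-a` and parameter `s = r / √(α² + r²)`, where `t² + s² = 1`. A circular cone with parameter
`s` meets the ball `B(0, R)` inside a ball of radius `R / (2s)`, so it fills at most a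
`(2s)⁻ᵏ` fraction of the Lebesgue measure of every ball centred at the origin. The Gaussian
density is radial and decreasing, hence by the layer-cake formula the same fraction bounds the
Gaussian measure of the cone.
-/

open scoped ENNReal RealInnerProductSpace

namespace MeasureTheory

theorem lintegral_fin_nat_prod_eq_prod {X : Type*} [MeasurableSpace X] {n : ℕ}
    {μ : Fin n → Measure X} [∀ i, SigmaFinite (μ i)] {f : Fin n → X → ℝ≥0∞}
    (hf : ∀ i, Measurable (f i)) :
    ∫⁻ x, ∏ i, f i (x i) ∂Measure.pi μ = ∏ i, ∫⁻ x, f i x ∂μ i := by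
  induction n with
  | zero => simp
  | succ n ih =>
    calc ∫⁻ x, ∏ i, f i (x i) ∂Measure.pi μ
        = ∫⁻ x : X × (Fin n → X), f 0 x.1 * ∏ i : Fin n, f i.succ (x.2 i)
            ∂(μ 0).prod (Measure.pi fun i => μ i.succ) := by
          rw [← ((measurePreserving_piFinSuccAbove μ 0).symm).lintegral_comp_emb
            (MeasurableEquiv.measurableEmbedding _)]
          simp [MeasurableEquiv.piFinSuccAbove_symm_apply, Fin.insertNthEquiv,
            Fin.prod_univ_succ, Fin.insertNth_zero']
      _ = (∫⁻ x, f 0 x ∂μ 0) * ∏ i : Fin n, ∫⁻ x, f i.succ x ∂μ i.succ := by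
          rw [← ih fun i => hf i.succ]
          exact lintegral_prod_mul (ν := Measure.pi fun i => μ i.succ)
            (g := fun y : Fin n → X => ∏ i, f i.succ (y i)) (hf 0).aemeasurable
            (Finset.measurable_prod _ fun i _ =>
              (hf i.succ).comp (measurable_pi_apply i)).aemeasurable
      _ = ∏ i, ∫⁻ x, f i x ∂μ i :=
        (Fin.prod_univ_succ fun i => ∫⁻ x, f i x ∂μ i).symm

theorem Measure.pi_withDensity {X : Type*} [MeasurableSpace X] {n : ℕ}
    (μ : Fin n → Measure X) [∀ i, SigmaFinite (μ i)] {f : Fin n → X → ℝ≥0∞}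
    (hf : ∀ i, Measurable (f i)) [∀ i, SigmaFinite ((μ i).withDensity (f i))] :
    Measure.pi (fun i => (μ i).withDensity (f i)) =
      (Measure.pi μ).withDensity fun x => ∏ i, f i (x i) := by
  refine Measure.pi_eq (μ := fun i => (μ i).withDensity (f i)) fun s hs => ?_
  rw [withDensity_apply _ (MeasurableSet.univ_pi hs), Measure.restrict_pi_pi,
    lintegral_fin_nat_prod_eq_prod hf]
  exact Finset.prod_congr rfl fun i _ => (withDensity_apply _ (hs i)).symm

theorem withDensity_apply_le_of_superlevel_le {α : Type*} [MeasurableSpace α] (μ : Measure α)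
    {g : α → ℝ} (hg : Measurable g) (hg_nonneg : ∀ x, 0 ≤ g x) {D : Set α}
    (hD : MeasurableSet D) {c : ℝ≥0∞} (hc : c ≠ ∞)
    (h : ∀ t > 0, μ (D ∩ {x | t < g x}) ≤ c * μ {x | t < g x}) :
    μ.withDensity (fun x => ENNReal.ofReal (g x)) D ≤
      c * μ.withDensity (fun x => ENNReal.ofReal (g x)) Set.univ := by
  rw [withDensity_apply _ hD, withDensity_apply _ MeasurableSet.univ, Measure.restrict_univ,
    lintegral_eq_lintegral_meas_lt _ (ae_of_all _ hg_nonneg) hg.aemeasurable,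
    lintegral_eq_lintegral_meas_lt _ (ae_of_all _ hg_nonneg) hg.aemeasurable,
    ← lintegral_const_mul' _ _ hc]
  refine setLIntegral_mono' measurableSet_Ioi fun t ht => ?_
  rw [Measure.restrict_apply (measurableSet_lt measurable_const hg), Set.inter_comm]
  exact h t ht

end MeasureTheory

open Real in
theorem setOf_lt_mul_exp_neg_norm_sq_eq_ball {E : Type*} [SeminormedAddCommGroup E] {C t : ℝ}
    (hC : 0 < C) (ht : 0 < t) :
    {x : E | t < C * rexp (-‖x‖ ^ 2 / 2)} = ball 0 √(-2 * log (t / C)) := by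
  ext x
  rw [Set.mem_ofPred_eq, mem_ball_zero_iff, Real.lt_sqrt (norm_nonneg x), ← div_lt_iff₀' hC,
    ← Real.log_lt_iff_lt_exp (div_pos ht hC)]
  constructor <;> intro h <;> linarith

open Real in
theorem stdGaussian_eq_withDensity (p : ℕ) :
    stdGaussian p = volume.withDensity fun x : EuclideanSpace ℝ (Fin p) =>
      ENNReal.ofReal ((√(2 * π))⁻¹ ^ p * rexp (-‖x‖ ^ 2 / 2)) := by
  have hdensity (x : EuclideanSpace ℝ (Fin p)) : ∏ i, gaussianPDF 0 1 (x i) =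
      ENNReal.ofReal ((√(2 * π))⁻¹ ^ p * rexp (-‖x‖ ^ 2 / 2)) := by
    simp_rw [gaussianPDF, gaussianPDFReal_def]
    rw [← ENNReal.ofReal_prod_of_nonneg (fun i _ => by positivity), Finset.prod_mul_distrib,
      ← Real.exp_sum, EuclideanSpace.real_norm_sq_eq]
    simp [Finset.sum_div, neg_div]
  have hγ := gaussianReal_of_var_ne_zero 0 one_ne_zero
  have : SigmaFinite (volume.withDensity (gaussianPDF 0 1)) := hγ ▸ inferInstance
  ext S hS
  rw [_root_.stdGaussian, Measure.map_apply (MeasurableEquiv.measurable _) hS, hγ,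
    Measure.pi_withDensity _ fun _ => measurable_gaussianPDF 0 1,
    withDensity_apply _ (MeasurableEquiv.measurable _ hS), withDensity_apply _ hS,
    ← (PiLp.volume_preserving_toLp (Fin p)).setLIntegral_comp_preimage hS (by fun_prop)]
  simp_rw [hdensity]
  rfl

instance isProbabilityMeasure_stdGaussian (p : ℕ) : IsProbabilityMeasure (stdGaussian p) :=
  Measure.isProbabilityMeasure_map (MeasurableEquiv.measurable _).aemeasurable

section CircularCone

variable {E : Type*} [NormedAddCommGroup E] [InnerProductSpace ℝ E]

def circularCone (a : E) (t : ℝ) : Set E := {z | t * ‖z‖ ≤ ⟪a, z⟫}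

theorem isClosed_circularCone (a : E) (t : ℝ) : IsClosed (circularCone a t) :=
  isClosed_le (continuous_const.mul continuous_norm) (continuous_const.inner continuous_id)

theorem mem_circularCone_neg_of_inner_nonpos {a w : E} (ha : ‖a‖ = 1) {t s : ℝ} (hs : 0 ≤ s)
    (hts : t ^ 2 + s ^ 2 = 1) (hw : ∀ z ∈ circularCone a t, ⟪w, z⟫ ≤ 0) :
    w ∈ circularCone (-a) s := by
  set β := ⟪a, w⟫
  set u := w - β • a
  have hau : ⟪a, u⟫ = 0 := by
    simp only [u, inner_sub_right, real_inner_smul_right, real_inner_self_eq_norm_sq, ha]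
    ring
  have hnorm (c d : ℝ) : ‖c • a + d • u‖ ^ 2 = c ^ 2 + d ^ 2 * ‖u‖ ^ 2 := by
    rw [norm_add_sq_real, real_inner_smul_left, real_inner_smul_right, hau, norm_smul, norm_smul,
      ha, mul_pow, mul_pow, Real.norm_eq_abs, Real.norm_eq_abs, sq_abs, sq_abs]
    ring
  have hnorm_w : ‖w‖ ^ 2 = β ^ 2 + ‖u‖ ^ 2 := by
    simpa [u] using hnorm β 1
  have hβ : β ≤ 0 := by
    have := hw a (by
      rw [circularCone, Set.mem_ofPred_eq, real_inner_self_eq_norm_sq, ha]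
      nlinarith)
    rwa [real_inner_comm] at this
  have hu : s ^ 2 * ‖u‖ ^ 2 ≤ t ^ 2 * β ^ 2 := by
    rcases (norm_nonneg u).eq_or_lt with hu0 | hupos
    · rw [← hu0, zero_pow two_ne_zero, mul_zero]
      positivity
    -- the generatrix of the cone in the plane spanned by `a` and `w`
    set z := (t * ‖u‖) • a + s • u
    have hz_norm : ‖z‖ = ‖u‖ := by
      refine (pow_left_inj₀ (norm_nonneg _) (norm_nonneg _) two_ne_zero).1 ?_
      rw [hnorm]
      linear_combination ‖u‖ ^ 2 * hts
    have hz : ⟪w, z⟫ ≤ 0 := hw z (by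
      simp [circularCone, z, hz_norm, inner_add_right, real_inner_smul_right, ha, hau])
    have hwz : ⟪w, z⟫ = ‖u‖ * (t * β + s * ‖u‖) := by
      rw [show w = β • a + u by simp [u]]
      simp only [z, inner_add_left, inner_add_right, real_inner_smul_left, real_inner_smul_right,
        real_inner_self_eq_norm_sq, ha, hau, real_inner_comm a u ▸ hau]
      ring
    have : s * ‖u‖ ≤ -(t * β) := by nlinarith
    nlinarith
  show s * ‖w‖ ≤ ⟪-a, w⟫
  rw [inner_neg_left, ← pow_le_pow_iff_left₀ (by positivity) (by linarith) two_ne_zero]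
  nlinarith

theorem circularCone_inter_closedBall_subset {b : E} (hb : ‖b‖ = 1) {s : ℝ} (hs : 0 < s)
    (R : ℝ) :
    circularCone b s ∩ closedBall 0 R ⊆ closedBall ((R / (2 * s)) • b) (R / (2 * s)) := by
  rintro x ⟨hx_cone, hx_ball⟩
  rw [mem_closedBall_zero_iff] at hx_ball
  have hR : 0 ≤ R / (2 * s) := div_nonneg ((norm_nonneg x).trans hx_ball) (by positivity)
  rw [mem_closedBall, dist_eq_norm,
    ← pow_le_pow_iff_left₀ (norm_nonneg _) hR two_ne_zero, norm_sub_sq_real,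
    real_inner_smul_right, norm_smul, Real.norm_of_nonneg hR, hb, mul_one, real_inner_comm]
  have h2s : R / (2 * s) * (2 * s) = R := by field_simp
  have : R / (2 * s) * (s * ‖x‖) ≤ R / (2 * s) * ⟪b, x⟫ :=
    mul_le_mul_of_nonneg_left hx_cone hR
  nlinarith [norm_nonneg x]

variable [FiniteDimensional ℝ E] [MeasurableSpace E] [BorelSpace E]

theorem addHaar_circularCone_inter_ball_le (μ : Measure E) [μ.IsAddHaarMeasure] {b : E}
    (hb : ‖b‖ = 1) {s : ℝ} (hs : 0 < s) (R : ℝ) :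
    μ (circularCone b s ∩ ball 0 R) ≤
      ENNReal.ofReal ((1 / (2 * s)) ^ Module.finrank ℝ E) * μ (ball 0 R) := by
  rcases le_or_gt R 0 with hR | hR
  · simp [ball_eq_empty.2 hR]
  calc μ (circularCone b s ∩ ball 0 R)
      ≤ μ (closedBall ((R / (2 * s)) • b) (R / (2 * s))) :=
        measure_mono ((Set.inter_subset_inter_right _ ball_subset_closedBall).trans
          (circularCone_inter_closedBall_subset hb hs R))
    _ = ENNReal.ofReal ((1 / (2 * s)) ^ Module.finrank ℝ E) * μ (ball 0 R) := by
      rw [Measure.addHaar_closedBall _ _ (by positivity), Measure.addHaar_ball_of_pos _ _ hR,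
        ← mul_assoc, ← ENNReal.ofReal_mul (by positivity), ← mul_pow, one_div_mul_eq_div]

end CircularCone

open Real in
theorem stdGaussian_circularCone_le {p : ℕ} {b : EuclideanSpace ℝ (Fin p)} (hb : ‖b‖ = 1)
    {s : ℝ} (hs : 0 < s) :
    stdGaussian p (circularCone b s) ≤ ENNReal.ofReal ((1 / (2 * s)) ^ p) := by
  have hC : 0 < (√(2 * π))⁻¹ ^ p := by positivity
  calc stdGaussian p (circularCone b s)
      ≤ ENNReal.ofReal ((1 / (2 * s)) ^ p) * stdGaussian p Set.univ := by
        rw [stdGaussian_eq_withDensity]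
        refine withDensity_apply_le_of_superlevel_le _ (by fun_prop) (fun x => by positivity)
          (isClosed_circularCone b s).measurableSet ENNReal.ofReal_ne_top fun t ht => ?_
        rw [setOf_lt_mul_exp_neg_norm_sq_eq_ball hC ht]
        simpa [finrank_euclideanSpace_fin] using addHaar_circularCone_inter_ball_le volume hb hs _
    _ = ENNReal.ofReal ((1 / (2 * s)) ^ p) := by rw [measure_univ, mul_one]

theorem solidAngle_le_of_simplicial_constant_general
    (k : ℕ) (P : Set (EuclideanSpace ℝ (Fin k))) (h : EuclideanSpace ℝ (Fin k)) (α : ℝ)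
    (r : ℝ) (hrpos : 0 < r) (a : EuclideanSpace ℝ (Fin k)) (ha : ‖a‖ = 1)
    (hcone : {z : EuclideanSpace ℝ (Fin k) |
        α / Real.sqrt (α ^ 2 + r ^ 2) * ‖z‖ ≤ (inner ℝ a z : ℝ)} ⊆
      {z | ∃ t : ℝ, 0 ≤ t ∧ ∃ y ∈ P, z = t • (y - h)}) :
    solidAngle (normalCone P h) ≤ (Real.sqrt (α ^ 2 + r ^ 2) / (2 * r)) ^ k := by
  have hs : 0 < r / √(α ^ 2 + r ^ 2) := by positivity
  have hts : (α / √(α ^ 2 + r ^ 2)) ^ 2 + (r / √(α ^ 2 + r ^ 2)) ^ 2 = 1 := by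
    rw [div_pow, div_pow, ← add_div, Real.sq_sqrt (by positivity), div_self (by positivity)]
  have hnormal : normalCone P h ⊆ circularCone (-a) (r / √(α ^ 2 + r ^ 2)) := by
    refine fun w hw => mem_circularCone_neg_of_inner_nonpos ha hs.le hts fun z hz => ?_
    obtain ⟨t, ht, y, hy, rfl⟩ := hcone hz
    rw [real_inner_smul_right]
    exact mul_nonpos_of_nonneg_of_nonpos ht (hw y hy)
  have hbound := (measure_mono hnormal).trans (stdGaussian_circularCone_le (by rwa [norm_neg]) hs)
  have hval : 1 / (2 * (r / √(α ^ 2 + r ^ 2))) = √(α ^ 2 + r ^ 2) / (2 * r) := by field_simp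
  rw [hval] at hbound
  exact ENNReal.toReal_le_of_le_ofReal (by positivity) hbound

/-- Lemma: an extreme point with a large simplicial constant has a small normal cone. If the
tangent cone at `h` contains the circular cone with axis `a` and half-angle `arctan(r/α)`,
and `r²/(α² + r²) ≥ 1/2`, then `ω(N_P(h)) ≤ (√(α² + r²)/(2r))^k`. -/
theorem solidAngle_le_of_simplicial_constant
    (k n : ℕ) (hk : 2 ≤ k) (x : Fin n → EuclideanSpace ℝ (Fin k))
    (P : Set (EuclideanSpace ℝ (Fin k))) (hP : P = convexHull ℝ (Set.range x))
    (htwo : ∃ a b : EuclideanSpace ℝ (Fin k),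
      a ∈ Set.extremePoints ℝ P ∧ b ∈ Set.extremePoints ℝ P ∧ a ≠ b)
    (h : EuclideanSpace ℝ (Fin k)) (hh : h ∈ Set.extremePoints ℝ P)
    (α : ℝ) (hα : α = simplicialConst P h) (hαpos : 0 < α)
    (r : ℝ) (hrpos : 0 < r) (a : EuclideanSpace ℝ (Fin k)) (ha : ‖a‖ = 1)
    (hhalf : 1 / 2 ≤ r ^ 2 / (α ^ 2 + r ^ 2))
    (hcone : {z : EuclideanSpace ℝ (Fin k) |
        α / Real.sqrt (α ^ 2 + r ^ 2) * ‖z‖ ≤ (inner ℝ a z : ℝ)} ⊆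
      {z | ∃ t : ℝ, 0 ≤ t ∧ ∃ y ∈ P, z = t • (y - h)}) :
    solidAngle (normalCone P h) ≤ (Real.sqrt (α ^ 2 + r ^ 2) / (2 * r)) ^ k :=
  solidAngle_le_of_simplicial_constant_general k P h α r hrpos a ha hcone
end

section
/- For every n ≥ 2 and every point x ∈ ℝ^n, the Euclidean projection of x onto the intersection of the second-order cone K_2^n = {x ∈ ℝ^n : ‖(x_1, …, x_{n−1})‖₂ ≤ x_n} and the non-negative orthant ℝ₊^n is obtained by first projecting onto ℝ₊^{n−1} × ℝ and then projecting onto K_2^n: P_{K_2^n ∩ ℝ₊^n}(x) = P_{K_2^n}(P_{ℝ₊^{n−1} × ℝ}(x)). -/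
open Metric Set
open scoped Pointwise

/-- The second-order cone `K₂ⁿ = {x ∈ ℝⁿ : ‖(x₁, …, x_{n−1})‖₂ ≤ x_n}`, with `n = m + 1`. -/
def soc (m : ℕ) : Set (EuclideanSpace ℝ (Fin (m + 1))) :=
  {x | Real.sqrt (∑ i : Fin m, x (Fin.castSucc i) ^ 2) ≤ x (Fin.last m)}

/-- The non-negative orthant `ℝ₊ⁿ`, with `n = m + 1`. -/
def orthant (m : ℕ) : Set (EuclideanSpace ℝ (Fin (m + 1))) :=
  {x | ∀ i, 0 ≤ x i}

/-- The set `Q = ℝ₊^{n−1} × ℝ`, with `n = m + 1`. -/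
def halfOrthant (m : ℕ) : Set (EuclideanSpace ℝ (Fin (m + 1))) :=
  {x | ∀ i : Fin m, 0 ≤ x (Fin.castSucc i)}

/-- `y` is the Euclidean (metric) projection of `x` onto `C`: it is the point of `C`
closest to `x`. -/
def IsProjOn {p : ℕ} (C : Set (EuclideanSpace ℝ (Fin p)))
    (x y : EuclideanSpace ℝ (Fin p)) : Prop :=
  y ∈ C ∧ ∀ z ∈ C, ‖x - y‖ ≤ ‖x - z‖

/-- The polar cone `K° = {y : ⟨x, y⟩ ≤ 0 for all x ∈ K}`. -/
def polarCone {p : ℕ} (K : Set (EuclideanSpace ℝ (Fin p))) :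
    Set (EuclideanSpace ℝ (Fin p)) :=
  {y | ∀ x ∈ K, (inner ℝ x y : ℝ) ≤ 0}

/-!
Write `q = P_Q(x)` and `y = P_K(q)`. Coordinatewise, `q` clamps the first `n - 1` coordinates of
`x` at `0` and keeps the last one. Testing the variational inequality of `y` against `y` with one
of its first `n - 1` coordinates set to zero (still a point of `K`) shows that each such coordinate
of `y` lies between `0` and the corresponding one of `q`; hence `y ∈ K ∩ ℝ₊ⁿ`, and `y` vanishes
wherever `x - q ≠ 0`. Then `⟪x - y, w - y⟫ = ⟪x - q, w - y⟫ + ⟪q - y, w - y⟫ ≤ 0` for every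
`w ∈ K ∩ ℝ₊ⁿ`: the second term because `y = P_K(q)`, the first because `x - q ≤ 0` is supported
where `y = 0` and `w ≥ 0`. So `y` is the projection of `x` onto `K ∩ ℝ₊ⁿ`.
-/

open scoped RealInnerProductSpace

section ProjectionOntoConvex

variable {p : ℕ} {C : Set (EuclideanSpace ℝ (Fin p))} {x y : EuclideanSpace ℝ (Fin p)}

theorem IsProjOn.real_inner_sub_nonpos (hC : Convex ℝ C) (h : IsProjOn C x y) :
    ∀ w ∈ C, ⟪x - y, w - y⟫ ≤ 0 := by
  have : Nonempty C := ⟨⟨y, h.1⟩⟩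
  rw [← norm_eq_iInf_iff_real_inner_le_zero hC h.1]
  exact le_antisymm (le_ciInf fun w => h.2 w w.2)
    (ciInf_le ⟨0, fun _ ⟨_, hw⟩ => hw ▸ norm_nonneg _⟩ (⟨y, h.1⟩ : C))

theorem IsProjOn.of_real_inner_sub_nonpos (hy : y ∈ C) (h : ∀ w ∈ C, ⟪x - y, w - y⟫ ≤ 0) :
    IsProjOn C x y := by
  refine ⟨hy, fun w hw => ?_⟩
  have hsq : ‖x - w‖ ^ 2 = ‖x - y‖ ^ 2 - 2 * ⟪x - y, w - y⟫ + ‖w - y‖ ^ 2 := by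
    rw [show x - w = (x - y) - (w - y) by abel, norm_sub_sq_real]
  exact pow_le_pow_iff_left₀ (norm_nonneg _) (norm_nonneg _) two_ne_zero |>.mp <| by
    nlinarith [h w hw, sq_nonneg ‖w - y‖]

theorem IsProjOn.unique (hC : Convex ℝ C) {y' : EuclideanSpace ℝ (Fin p)} (h : IsProjOn C x y)
    (h' : IsProjOn C x y') : y = y' := by
  have h₁ := h.real_inner_sub_nonpos hC y' h'.1
  have h₂ := h'.real_inner_sub_nonpos hC y h.1
  have : ‖y' - y‖ ^ 2 = ⟪x - y, y' - y⟫ + ⟪x - y', y - y'⟫ := by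
    rw [← real_inner_self_eq_norm_sq, show y - y' = -(y' - y) by abel, inner_neg_right,
      ← sub_eq_add_neg, ← inner_sub_left, sub_sub_sub_cancel_left]
  exact (sub_eq_zero.mp (norm_eq_zero.mp (pow_eq_zero_iff two_ne_zero |>.mp
    (le_antisymm (by linarith) (sq_nonneg _))))).symm

theorem IsProjOn.sub_apply_mul_nonpos (hC : Convex ℝ C) (h : IsProjOn C x y) {i : Fin p} {c : ℝ}
    (hc : y + EuclideanSpace.single i c ∈ C) : (x i - y i) * c ≤ 0 := by
  simpa [EuclideanSpace.inner_single_right, mul_comm] using h.real_inner_sub_nonpos hC _ hc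

end ProjectionOntoConvex

theorem convex_orthant (m : ℕ) : Convex ℝ (orthant m) := by
  intro u hu v hv a b ha hb _ i
  simpa using add_nonneg (mul_nonneg ha (hu i)) (mul_nonneg hb (hv i))

theorem convex_halfOrthant (m : ℕ) : Convex ℝ (halfOrthant m) := by
  intro u hu v hv a b ha hb _ i
  simpa using add_nonneg (mul_nonneg ha (hu i)) (mul_nonneg hb (hv i))

noncomputable def truncLast {m : ℕ} (x : EuclideanSpace ℝ (Fin (m + 1))) :
    EuclideanSpace ℝ (Fin m) :=
  WithLp.toLp 2 fun i => x i.castSucc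

theorem mem_soc_iff {m : ℕ} {x : EuclideanSpace ℝ (Fin (m + 1))} :
    x ∈ soc m ↔ ‖truncLast x‖ ≤ x (Fin.last m) := by
  simp [soc, truncLast, EuclideanSpace.norm_eq, Real.norm_eq_abs, sq_abs]

theorem convex_soc (m : ℕ) : Convex ℝ (soc m) := by
  intro u hu v hv a b ha hb _
  rw [mem_soc_iff] at hu hv ⊢
  calc ‖a • truncLast u + b • truncLast v‖ ≤ a * ‖truncLast u‖ + b * ‖truncLast v‖ := by
        grw [norm_add_le, norm_smul, norm_smul, Real.norm_of_nonneg ha, Real.norm_of_nonneg hb]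
    _ ≤ a * u (Fin.last m) + b * v (Fin.last m) := by gcongr

theorem add_single_neg_apply_mem_soc {m : ℕ} {y : EuclideanSpace ℝ (Fin (m + 1))}
    (hy : y ∈ soc m) (i : Fin m) :
    y + EuclideanSpace.single i.castSucc (-y i.castSucc) ∈ soc m := by
  refine le_trans (Real.sqrt_le_sqrt (y := ∑ j : Fin m, y j.castSucc ^ 2)
    (Finset.sum_le_sum fun j _ => ?_)) ?_
  · by_cases hji : j = i <;> simp [hji, sq_nonneg]
  · simpa [soc, (Fin.castSucc_lt_last i).ne'] using hy

section ProjectionOntoCones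

variable {m : ℕ} {x q y : EuclideanSpace ℝ (Fin (m + 1))}

theorem add_single_last_mem_halfOrthant (hq : q ∈ halfOrthant m) (c : ℝ) :
    q + EuclideanSpace.single (Fin.last m) c ∈ halfOrthant m := fun i => by
  simpa [(Fin.castSucc_lt_last i).ne] using hq i

theorem add_single_castSucc_mem_halfOrthant (hq : q ∈ halfOrthant m) {i : Fin m} {c : ℝ}
    (hc : 0 ≤ q i.castSucc + c) : q + EuclideanSpace.single i.castSucc c ∈ halfOrthant m :=
  fun j => by
    by_cases hji : j = i
    · simpa [hji] using hc
    · simpa [hji] using hq j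

theorem IsProjOn.halfOrthant_apply_last (h : IsProjOn (halfOrthant m) x q) :
    q (Fin.last m) = x (Fin.last m) := by
  have hup := h.sub_apply_mul_nonpos (convex_halfOrthant m) (add_single_last_mem_halfOrthant h.1 1)
  have hdown :=
    h.sub_apply_mul_nonpos (convex_halfOrthant m) (add_single_last_mem_halfOrthant h.1 (-1))
  linarith

theorem IsProjOn.halfOrthant_apply_castSucc (h : IsProjOn (halfOrthant m) x q) (i : Fin m) :
    q i.castSucc = max (x i.castSucc) 0 := by
  have hq := h.1 i
  have hup := h.sub_apply_mul_nonpos (convex_halfOrthant m)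
    (add_single_castSucc_mem_halfOrthant h.1 (c := 1) (by linarith))
  have hzero := h.sub_apply_mul_nonpos (convex_halfOrthant m)
    (add_single_castSucc_mem_halfOrthant h.1 (c := -q i.castSucc) (by linarith))
  rcases mul_eq_zero.mp (show (x i.castSucc - q i.castSucc) * q i.castSucc = 0 by nlinarith)
    with hxq | hq0
  · rw [max_eq_left (by linarith)]; linarith
  · rw [max_eq_right (by linarith), hq0]

theorem IsProjOn.soc_apply_castSucc_mem_Icc (h : IsProjOn (soc m) q y) {i : Fin m}
    (hq : 0 ≤ q i.castSucc) : y i.castSucc ∈ Icc 0 (q i.castSucc) := by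
  have := h.sub_apply_mul_nonpos (convex_soc m) (add_single_neg_apply_mem_soc h.1 i)
  constructor <;> nlinarith

theorem IsProjOn.soc_mem_orthant (h : IsProjOn (soc m) q y) (hq : q ∈ halfOrthant m) :
    y ∈ orthant m :=
  Fin.lastCases ((Real.sqrt_nonneg _).trans h.1)
    fun i => (h.soc_apply_castSucc_mem_Icc (hq i)).1

theorem real_inner_sub_halfOrthant_proj_nonpos {w : EuclideanSpace ℝ (Fin (m + 1))}
    (hq : IsProjOn (halfOrthant m) x q) (hy : IsProjOn (soc m) q y) (hw : w ∈ orthant m) :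
    ⟪x - q, w - y⟫ ≤ 0 := by
  simp only [PiLp.inner_apply, Fin.sum_univ_castSucc, PiLp.sub_apply, hq.halfOrthant_apply_last,
    sub_self, RCLike.inner_apply, conj_trivial, mul_zero, add_zero]
  refine Finset.sum_nonpos fun i _ => ?_
  have hy_i := hy.soc_apply_castSucc_mem_Icc (hq.1 i)
  rw [hq.halfOrthant_apply_castSucc] at hy_i ⊢
  rcases le_total 0 (x i.castSucc) with hx | hx
  · simp [max_eq_left hx]
  · rw [max_eq_right hx] at hy_i ⊢
    rw [le_antisymm hy_i.2 hy_i.1]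
    nlinarith [hw i.castSucc]

end ProjectionOntoCones

theorem proj_soc_inter_orthant_general
    (m : ℕ) (x q y z : EuclideanSpace ℝ (Fin (m + 1)))
    (hq : IsProjOn (halfOrthant m) x q)
    (hy : IsProjOn (soc m) q y)
    (hz : IsProjOn (soc m ∩ orthant m) x z) :
    z = y := by
  refine hz.unique ((convex_soc m).inter (convex_orthant m)) <|
    .of_real_inner_sub_nonpos ⟨hy.1, hy.soc_mem_orthant hq.1⟩ fun w hw => ?_
  calc ⟪x - y, w - y⟫ = ⟪x - q, w - y⟫ + ⟪q - y, w - y⟫ := by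
        rw [← inner_add_left, sub_add_sub_cancel]
    _ ≤ 0 := add_nonpos (real_inner_sub_halfOrthant_proj_nonpos hq hy hw.2)
        (hy.real_inner_sub_nonpos (convex_soc m) w hw.1)

/-- Projection onto the intersection of the second-order cone and the non-negative orthant:
`P_{K₂ⁿ ∩ ℝ₊ⁿ}(x) = P_{K₂ⁿ}(P_{ℝ₊^{n−1} × ℝ}(x))` (here `n = m + 1 ≥ 2`). -/
theorem proj_soc_inter_orthant
    (m : ℕ) (hm : 1 ≤ m) (x q y z : EuclideanSpace ℝ (Fin (m + 1)))
    (hq : IsProjOn (halfOrthant m) x q)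
    (hy : IsProjOn (soc m) q y)
    (hz : IsProjOn (soc m ∩ orthant m) x z) :
    z = y :=
  proj_soc_inter_orthant_general m x q y z hq hy hz
end

section
/- Let x_1, …, x_n ∈ ℝ^p and suppose conv{x_1, …, x_n} has exactly k extreme points. Let d ≥ k + 1 and let G be a d × p random matrix with i.i.d. standard normal entries. Then, with probability one, for every extreme point h of conv{x_1, …, x_n}, the image Gh is an extreme point of conv{Gx_1, …, Gx_n}; i.e., projecting the point cloud onto a random subspace of dimension at least k + 1 preserves all of the extreme points almost surely. -/
/-!
The directions spanned by the extreme points of `P = conv{xᵢ}` form a subspace `V` of dimension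
at most `k`. If `G` is injective on `V`, it is injective on `P`, which lies in the affine span of
its extreme points, and a linear map injective on a convex set keeps its extreme points extreme.
`G` fails to be injective on `V` only if a fixed `dim V × dim V` minor of `G`, taken against a
basis of `V`, vanishes. That minor is a nonzero polynomial in the entries of `G`, and the zero set
of a nonzero polynomial is null for any product of atomless σ-finite measures on `ℝ` (induction
on the number of variables, Fubini in the last one).
-/

open MeasureTheory ProbabilityTheory Set Module

namespace MvPolynomial

theorem measure_setOf_eval_eq_zero_fin :
    ∀ {N : ℕ} (μ : Fin N → Measure ℝ) [∀ i, SigmaFinite (μ i)]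
      [∀ i, NullSingletonClass (μ i)]
      {q : MvPolynomial (Fin N) ℝ}, q ≠ 0 → Measure.pi μ {y | eval y q = 0} = 0
  | 0, μ, _, _, q, hq => by
    obtain ⟨c, rfl⟩ : ∃ c, q = C c := ⟨_, eq_C_of_isEmpty q⟩
    have hc : c ≠ 0 := by rintro rfl; exact hq (map_zero C)
    simp [hc]
  | N + 1, μ, _, _, q, hq => by
    set q' := finSuccEquiv ℝ N q
    have hq' : q' ≠ 0 := (map_ne_zero_iff _ (finSuccEquiv ℝ N).injective).mpr hq
    have hlead : ∀ᵐ z ∂Measure.pi (fun j => μ (Fin.succ j)), eval z q'.leadingCoeff ≠ 0 :=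
      measure_eq_zero_iff_ae_notMem.mp
        (measure_setOf_eval_eq_zero_fin _ (Polynomial.leadingCoeff_ne_zero.mpr hq'))
    have hmeas : MeasurableSet {y : Fin (N + 1) → ℝ | eval y q = 0} :=
      measurableSet_eq_fun (continuous_eval q).measurable measurable_const
    rw [← (measurePreserving_piFinSuccAbove μ 0).symm.measure_preimage hmeas.nullMeasurableSet,
      Measure.prod_apply_symm (MeasurableEquiv.measurable _ hmeas)]
    refine (lintegral_congr_ae ?_).trans lintegral_zero
    -- Off the null set where the leading coefficient vanishes, each fiber is a finite root set.
    filter_upwards [hlead] with z hz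
    have hz' : q'.map (eval z) ≠ 0 := fun h0 => hz <| by
      simpa using congrArg (Polynomial.coeff · q'.natDegree) h0
    refine measure_mono_null (fun t ht => ?_)
      ((Polynomial.finite_setOfPred_isRoot hz').measure_zero (μ 0))
    simpa [MeasurableEquiv.piFinSuccAbove, Fin.insertNthEquiv, eval_eq_eval_mv_eval', q'] using ht

theorem measure_setOf_eval_eq_zero {ι : Type*} [Fintype ι] (μ : ι → Measure ℝ)
    [∀ i, SigmaFinite (μ i)] [∀ i, NullSingletonClass (μ i)] {q : MvPolynomial ι ℝ}
    (hq : q ≠ 0) : Measure.pi μ {y | eval y q = 0} = 0 := by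
  let e := Fintype.equivFin ι
  have hmeas : MeasurableSet {y : ι → ℝ | eval y q = 0} :=
    measurableSet_eq_fun (continuous_eval q).measurable measurable_const
  rw [← (measurePreserving_piCongrLeft μ e.symm).measure_preimage hmeas.nullMeasurableSet]
  convert measure_setOf_eval_eq_zero_fin (fun a => μ (e.symm a))
    ((map_ne_zero_iff _ (rename_injective e e.injective)).mpr hq) using 2
  ext w
  simp [eval_rename, Function.comp_def, MeasurableEquiv.piCongrLeft, Equiv.piCongrLeft,
    Equiv.piCongrLeft']

theorem measure_pi_pi_setOf_eval_uncurry_eq_zero {κ ι : Type*} [Fintype κ] [Fintype ι]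
    (μ : κ → ι → Measure ℝ) [∀ i j, IsProbabilityMeasure (μ i j)]
    [∀ i j, NullSingletonClass (μ i j)] {q : MvPolynomial (κ × ι) ℝ} (hq : q ≠ 0) :
    Measure.pi (fun i => Measure.pi (μ i)) {G | eval (Function.uncurry G) q = 0} = 0 := by
  simp only [← Measure.infinitePi_eq_pi]
  rw [← Measure.infinitePi_map_curry, MeasurableEquiv.map_apply, Measure.infinitePi_eq_pi]
  exact measure_setOf_eval_eq_zero _ hq

end MvPolynomial

theorem LinearMap.image_extremePoints_subset_of_injOn {𝕜 E F : Type*} [Semiring 𝕜]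
    [PartialOrder 𝕜] [AddCommMonoid E] [Module 𝕜 E] [AddCommMonoid F] [Module 𝕜 F]
    {s : Set E} (hs : Convex 𝕜 s) (f : E →ₗ[𝕜] F) (hf : InjOn f s) :
    f '' extremePoints 𝕜 s ⊆ extremePoints 𝕜 (f '' s) := by
  rintro _ ⟨z, ⟨hzs, hz⟩, rfl⟩
  refine ⟨mem_image_of_mem f hzs, ?_⟩
  rintro _ ⟨a, ha, rfl⟩ _ ⟨c, hc, rfl⟩ ⟨t, u, ht, hu, htu, hfz⟩
  have hcomb : t • a + u • c = z :=
    hf (hs ha hc ht.le hu.le htu) hzs (by rw [map_add, map_smul, map_smul, hfz])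
  exact congrArg f (hz ha hc ⟨t, u, ht, hu, htu, hcomb⟩)

theorem LinearMap.injOn_affineSpan_of_disjoint_ker {k E F : Type*} [Ring k] [AddCommGroup E]
    [Module k E] [AddCommGroup F] [Module k F] {s : Set E} {f : E →ₗ[k] F}
    (hf : Disjoint (vectorSpan k s) (ker f)) : InjOn f (affineSpan k s) := by
  intro a ha c hc hac
  have hsub : a - c ∈ vectorSpan k s :=
    direction_affineSpan k s ▸ AffineSubspace.vsub_mem_direction ha hc
  exact sub_eq_zero.mp (Submodule.disjoint_def.mp hf _ hsub (by simp [hac]))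

theorem IsCompact.subset_affineSpan_extremePoints {E : Type*} [NormedAddCommGroup E]
    [NormedSpace ℝ E] [FiniteDimensional ℝ E] {s : Set E} (hs : IsCompact s)
    (hconv : Convex ℝ s) : s ⊆ affineSpan ℝ (extremePoints ℝ s) :=
  calc s = closure (convexHull ℝ (extremePoints ℝ s)) :=
        (closure_convexHull_extremePoints hs hconv).symm
    _ ⊆ closure (affineSpan ℝ (extremePoints ℝ s)) :=
        closure_mono (convexHull_subset_affineSpan _)
    _ = affineSpan ℝ (extremePoints ℝ s) :=
        (AffineSubspace.closed_of_finiteDimensional _).closure_eq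

theorem LinearMap.image_extremePoints_subset_of_disjoint_ker {E F : Type*}
    [NormedAddCommGroup E] [NormedSpace ℝ E] [FiniteDimensional ℝ E] [AddCommGroup F]
    [Module ℝ F] {s : Set E} (hs : IsCompact s) (hconv : Convex ℝ s) (f : E →ₗ[ℝ] F)
    (hf : Disjoint (vectorSpan ℝ (extremePoints ℝ s)) (ker f)) :
    f '' extremePoints ℝ s ⊆ extremePoints ℝ (f '' s) :=
  f.image_extremePoints_subset_of_injOn hconv
    ((injOn_affineSpan_of_disjoint_ker hf).mono (hs.subset_affineSpan_extremePoints hconv))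

theorem finrank_vectorSpan_range_le_card {k E ι : Type*} [DivisionRing k] [AddCommGroup E]
    [Module k E] [Fintype ι] (v : ι → E) :
    finrank k (vectorSpan k (range v)) ≤ Fintype.card ι := by
  have hle : vectorSpan k (range v) ≤ Submodule.span k (range v) := by
    rw [vectorSpan_def, Submodule.span_le]
    rintro _ ⟨a, ha, c, hc, rfl⟩
    exact sub_mem (Submodule.subset_span ha) (Submodule.subset_span hc)
  have := FiniteDimensional.span_of_finite k (finite_range v)
  exact (Submodule.finrank_mono hle).trans (finrank_range_le_card v)

namespace Matrix

variable {κ ι m : Type*} [Fintype ι]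

def euclideanMulVecLin (G : Matrix κ ι ℝ) : EuclideanSpace ℝ ι →ₗ[ℝ] κ → ℝ :=
  G.mulVecLin ∘ₗ (WithLp.linearEquiv 2 ℝ (ι → ℝ)).toLinearMap

theorem disjoint_span_ker_euclideanMulVecLin [Fintype m] [DecidableEq m] (G : Matrix κ ι ℝ)
    (e : m → κ) (B : Matrix m ι ℝ) (hdet : (G.submatrix e id * Bᵀ).det ≠ 0) :
    Disjoint (Submodule.span ℝ (range fun a => WithLp.toLp 2 (B a)))
      (LinearMap.ker G.euclideanMulVecLin) := by
  rw [Submodule.disjoint_def]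
  intro v hv hGv
  obtain ⟨r, rfl⟩ := (Submodule.mem_span_range_iff_exists_fun ℝ).mp hv
  have hsum : WithLp.ofLp (∑ c, r c • WithLp.toLp 2 (B c)) = Bᵀ *ᵥ r := by
    ext j
    simp [mulVec, dotProduct, mul_comm]
  have hr : (G.submatrix e id * Bᵀ) *ᵥ r = 0 := by
    funext a
    rw [← mulVec_mulVec, ← hsum]
    exact congrFun hGv (e a)
  simp [eq_zero_of_mulVec_eq_zero hdet hr]

theorem exists_mvPolynomial_ne_zero_disjoint_ker_euclideanMulVecLin [Fintype κ]
    (V : Submodule ℝ (EuclideanSpace ℝ ι)) (hV : finrank ℝ V ≤ Fintype.card κ) :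
    ∃ Q : MvPolynomial (κ × ι) ℝ, Q ≠ 0 ∧ ∀ G : κ → ι → ℝ,
      MvPolynomial.eval (Function.uncurry G) Q ≠ 0 →
        Disjoint V (LinearMap.ker (of G).euclideanMulVecLin) := by
  classical
  obtain ⟨e⟩ : Nonempty (Fin (finrank ℝ V) ↪ κ) :=
    Function.Embedding.nonempty_of_card_le (by simpa using hV)
  let b := Module.finBasis ℝ V
  let v a : EuclideanSpace ℝ ι := b a
  let B : Matrix (Fin (finrank ℝ V)) ι ℝ := of fun a => WithLp.ofLp (v a)
  have hV_span : V = Submodule.span ℝ (range fun a => WithLp.toLp 2 (B a)) := by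
    change V = Submodule.span ℝ (range (V.subtype ∘ b))
    rw [range_comp, Submodule.span_image, b.span_eq, Submodule.map_subtype_top]
  -- `Q G` is the minor of `G` on the rows `e`, tested against the basis of `V`.
  set Q := (of fun a c => ∑ j, MvPolynomial.X (e a, j) * MvPolynomial.C (B c j)).det with hQ
  have heval : ∀ G : κ → ι → ℝ,
      MvPolynomial.eval (Function.uncurry G) Q = ((of G).submatrix e id * Bᵀ).det := by
    intro G
    rw [hQ, RingHom.map_det]
    congr 1
    ext a c
    simp [mul_apply]
  refine ⟨Q, fun hQ0 => ?_, fun G hG =>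
    hV_span ▸ disjoint_span_ker_euclideanMulVecLin _ e B (heval G ▸ hG)⟩
  -- At a matrix whose rows `e` are the basis of `V`, `Q` is a Gram determinant.
  let G₀ : κ → ι → ℝ := Function.extend e (fun a => WithLp.ofLp (v a)) 0
  have hgram : (of G₀).submatrix e id * Bᵀ = gram ℝ v := by
    ext a c
    simp [G₀, B, mul_apply, e.injective.extend_apply, PiLp.inner_apply, mul_comm]
  have hdet := heval G₀
  rw [hQ0, map_zero, hgram] at hdet
  exact det_gram_ne_zero_iff_linearIndependent.mpr
    (b.linearIndependent.map' V.subtype V.ker_subtype) hdet.symm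

end Matrix

theorem random_projection_preserves_extreme_points_general
    (p n k d : ℕ) (x : Fin n → EuclideanSpace ℝ (Fin p))
    (P : Set (EuclideanSpace ℝ (Fin p))) (hP : P = convexHull ℝ (Set.range x))
    (h : Fin k → EuclideanSpace ℝ (Fin p))
    (hext : Set.range h = Set.extremePoints ℝ P)
    (hd : k + 1 ≤ d) :
    (Measure.pi fun _ : Fin d => Measure.pi fun _ : Fin p => gaussianReal 0 1)
      {G | ∀ y ∈ Set.extremePoints ℝ P,
        (fun i : Fin d => ∑ j : Fin p, G i j * y j) ∈
          Set.extremePoints ℝ (convexHull ℝ (Set.range fun l : Fin n =>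
            fun i : Fin d => ∑ j : Fin p, G i j * x l j))} = 1 := by
  have hP_compact : IsCompact P := hP ▸ (finite_range x).isCompact_convexHull (𝕜 := ℝ)
  have hP_convex : Convex ℝ P := hP ▸ convex_convexHull ℝ _
  have hV : finrank ℝ (vectorSpan ℝ (extremePoints ℝ P)) ≤ Fintype.card (Fin d) := by
    rw [← hext, Fintype.card_fin]
    exact (finrank_vectorSpan_range_le_card h).trans (by rw [Fintype.card_fin]; omega)
  obtain ⟨Q, hQ, hdisj⟩ :=
    Matrix.exists_mvPolynomial_ne_zero_disjoint_ker_euclideanMulVecLin _ hV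
  have := nullSingletonClass_gaussianReal (μ := 0) one_ne_zero
  have hnull := MvPolynomial.measure_pi_pi_setOf_eval_uncurry_eq_zero
    (fun (_ : Fin d) (_ : Fin p) => gaussianReal 0 1) hQ
  refine (measure_congr (ae_eq_univ.mpr (measure_mono_null (fun G hbad => ?_) hnull))).trans
    measure_univ
  by_contra hG
  refine hbad fun y hy => ?_
  have himage := (Matrix.of G).euclideanMulVecLin.image_extremePoints_subset_of_disjoint_ker
    hP_compact hP_convex (hdisj G hG) ⟨y, hy, rfl⟩
  rwa [hP, LinearMap.image_convexHull, ← range_comp] at himage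

/-- Projecting a point cloud in `ℝ^p` with `k` extreme points onto a random subspace of
dimension `d ≥ k + 1`, via a `d × p` matrix `G` of i.i.d. standard normal entries, preserves
all extreme points with probability one: a.s. the image `Gh` of every extreme point `h` of
`conv{x₁, …, xₙ}` is an extreme point of `conv{Gx₁, …, Gxₙ}`. -/
theorem random_projection_preserves_extreme_points
    (p n k d : ℕ) (x : Fin n → EuclideanSpace ℝ (Fin p))
    (P : Set (EuclideanSpace ℝ (Fin p))) (hP : P = convexHull ℝ (Set.range x))
    (h : Fin k → EuclideanSpace ℝ (Fin p)) (hinj : Function.Injective h)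
    (hext : Set.range h = Set.extremePoints ℝ P)
    (hd : k + 1 ≤ d) :
    (Measure.pi fun _ : Fin d => Measure.pi fun _ : Fin p => gaussianReal 0 1)
      {G | ∀ y ∈ Set.extremePoints ℝ P,
        (fun i : Fin d => ∑ j : Fin p, G i j * y j) ∈
          Set.extremePoints ℝ (convexHull ℝ (Set.range fun l : Fin n =>
            fun i : Fin d => ∑ j : Fin p, G i j * x l j))} = 1 :=
  random_projection_preserves_extreme_points_general p n k d x P hP h hext hd
end
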